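/- The regularized Levi-Civita vector field f₁ᶜ at the first primary is well defined and real analytic at the origin (x̂,p̂,ŷ,q̂) = (0,p̂,0,q̂): the denominator ((x̂²+ŷ²)² + 1 + 2(x̂²-ŷ²))^{3/2} appearing in f₁ᶜ is bounded away from zero on a neighborhood of {x̂ = ŷ = 0}. More precisely, (x̂²+ŷ²)² + 1 + 2(x̂²-ŷ²) = ((x̂²+ŷ²)+1)² - 4ŷ² > 0 whenever (x̂,ŷ) ∉ {(0,1),(0,-1)}. -/

import Mathlib

/-!
With `z = x̂ + i ŷ` the denominator is `|z² + 1|² = |z - i|² |z + i|²`, the product of the squared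
distances from `(x̂, ŷ)` to `(0, 1)` and `(0, -1)`. It is therefore positive off these two points,
and on the disc `|z| < 1/2` each factor is at least `1/4`.
-/

theorem levi_civita_denom_eq_mul {R : Type*} [CommRing R] (x y : R) :
    (x ^ 2 + y ^ 2) ^ 2 + 1 + 2 * (x ^ 2 - y ^ 2) =
      (x ^ 2 + (y - 1) ^ 2) * (x ^ 2 + (y - -1) ^ 2) := by
  ring

theorem sq_add_sq_sub_pos {R : Type*} [Ring R] [LinearOrder R] [IsStrictOrderedRing R]
    {x y c : R} (h : (x, y) ≠ (0, c)) : 0 < x ^ 2 + (y - c) ^ 2 := by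
  have hne : x ≠ 0 ∨ y - c ≠ 0 := by
    contrapose! h
    rw [h.1, ← sub_eq_zero.mp h.2]
  rcases hne with hx | hy <;> positivity

section LinearOrderedField

variable {K : Type*} [Field K] [LinearOrder K] [IsStrictOrderedRing K]

theorem quarter_le_sq_add_sq_sub {x y c : K} (hc : c ^ 2 = 1) (h : x ^ 2 + y ^ 2 < 1 / 4) :
    1 / 4 ≤ x ^ 2 + (y - c) ^ 2 := by
  have hcy : c * y < 1 / 2 := by nlinarith [sq_nonneg x, sq_nonneg (c * y - 1 / 2)]
  have hdist : x ^ 2 + (y - c) ^ 2 = x ^ 2 + (1 - c * y) ^ 2 := by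
    linear_combination (1 - y ^ 2) * hc
  nlinarith [sq_nonneg x]

theorem levi_civita_denom_pos {x y : K} (h₁ : (x, y) ≠ (0, 1)) (h₂ : (x, y) ≠ (0, -1)) :
    0 < (x ^ 2 + y ^ 2) ^ 2 + 1 + 2 * (x ^ 2 - y ^ 2) := by
  rw [levi_civita_denom_eq_mul]
  exact mul_pos (sq_add_sq_sub_pos h₁) (sq_add_sq_sub_pos h₂)

theorem sixteenth_le_levi_civita_denom {x y : K} (h : x ^ 2 + y ^ 2 < 1 / 4) :
    1 / 16 ≤ (x ^ 2 + y ^ 2) ^ 2 + 1 + 2 * (x ^ 2 - y ^ 2) := by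
  rw [levi_civita_denom_eq_mul]
  calc (1 / 16 : K) = 1 / 4 * (1 / 4) := by norm_num
    _ ≤ _ := mul_le_mul (quarter_le_sq_add_sq_sub (by norm_num) h)
        (quarter_le_sq_add_sq_sub (by norm_num) h) (by norm_num) (by positivity)

end LinearOrderedField

/-- The quantity under the `3/2` power in the regularized Levi-Civita vector
field `f₁ᶜ` factors as `((x̂²+ŷ²)+1)² - 4ŷ²` and is strictly positive away from
the mirrored singularities `(0,±1)`.  In particular the denominator of `f₁ᶜ` is
bounded away from zero on a neighborhood of the collision set `{x̂ = ŷ = 0}`. -/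
theorem regularized_denominator_positive :
    (∀ xh yh : ℝ,
      (xh^2 + yh^2)^2 + 1 + 2*(xh^2 - yh^2) = ((xh^2 + yh^2) + 1)^2 - 4*yh^2) ∧
    (∀ xh yh : ℝ, (xh, yh) ≠ ((0 : ℝ), (1 : ℝ)) → (xh, yh) ≠ ((0 : ℝ), (-1 : ℝ)) →
      0 < (xh^2 + yh^2)^2 + 1 + 2*(xh^2 - yh^2)) ∧
    ∃ ε > (0 : ℝ), ∃ δ > (0 : ℝ), ∀ xh yh : ℝ, xh^2 + yh^2 < δ →
      ε ≤ Real.sqrt ((xh^2 + yh^2)^2 + 1 + 2*(xh^2 - yh^2))^3 := by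
  refine ⟨fun xh yh => by ring, fun xh yh => levi_civita_denom_pos,
    1 / 64, by norm_num, 1 / 4, by norm_num, fun xh yh h => ?_⟩
  have hsqrt : 1 / 4 ≤ √((xh ^ 2 + yh ^ 2) ^ 2 + 1 + 2 * (xh ^ 2 - yh ^ 2)) :=
    Real.le_sqrt_of_sq_le (by linarith [sixteenth_le_levi_civita_denom h])
  calc (1 / 64 : ℝ) = (1 / 4) ^ 3 := by norm_num
    _ ≤ _ := pow_le_pow_left₀ (by norm_num) hsqrt 3
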